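/- arXiv:1207.4214 — 2 statements merged into one kernel-verified Lean document; each statement's English description precedes it below -/
import Mathlib

section
/- Let μ₀, λ₀ : I → ℝ be continuously differentiable and strictly positive on an open interval I, and let x* ∈ I satisfy μ₀(x*) = λ₀(x*). Define g₁(x) = ln(μ₀(x)/λ₀(x)) and g₂(x) = 2(μ₀(x) − λ₀(x))/(μ₀(x) + λ₀(x)). Then g₁(x*) = g₂(x*) = 0 and g₁′(x*) = g₂′(x*) = (μ₀′(x*) − λ₀′(x*))/μ₀(x*). Consequently the leading-order stationary potentials of the chemical master equation and of its diffusion approximation have matched locations of extrema and matched curvatures at every fixed point of b(x) = μ₀(x) − λ₀(x). -/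
/-!
Writing `u = μ₀/λ₀`, the two potentials are `g₁ = log u` and `g₂ = 2(u - 1)/(u + 1)`. Both
vanish at `u = 1` with slope `1` in `u`, so at a fixed point, where `u = 1`, each has the
derivative `u' = (μ₀' - λ₀')/μ₀`.
-/

open Filter Topology

section FixedPointDerivatives

variable {f g : ℝ → ℝ} {f' g' x : ℝ}

theorem HasDerivAt.log_div_of_eq (hf : HasDerivAt f f' x) (hg : HasDerivAt g g' x)
    (hfg : f x = g x) (hfx : f x ≠ 0) :
    HasDerivAt (fun y => Real.log (f y / g y)) ((f' - g') / f x) x := by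
  have hgx : g x ≠ 0 := hfg ▸ hfx
  refine ((hf.div hg hgx).log (div_ne_zero hfx hgx)).congr_deriv ?_
  simp only [Pi.div_apply]
  rw [← hfg]
  field_simp

theorem HasDerivAt.two_mul_sub_div_add_of_eq (hf : HasDerivAt f f' x) (hg : HasDerivAt g g' x)
    (hfg : f x = g x) (hfx : f x ≠ 0) :
    HasDerivAt (fun y => 2 * (f y - g y) / (f y + g y)) ((f' - g') / f x) x := by
  have hsum : f x + g x ≠ 0 := by rw [← hfg, ← two_mul]; exact mul_ne_zero two_ne_zero hfx
  refine (((hf.sub hg).const_mul 2).div (hf.add hg) hsum).congr_deriv ?_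
  simp only [Pi.add_apply, Pi.sub_apply]
  rw [← hfg]
  field_simp
  ring

end FixedPointDerivatives

theorem cme_and_diffusion_potentials_match_at_fixed_points_general
    (a₁ a₂ : ℝ) (mu0 lam0 : ℝ → ℝ)
    (hmu : ContDiffOn ℝ 1 mu0 (Set.Ioo a₁ a₂))
    (hlam : ContDiffOn ℝ 1 lam0 (Set.Ioo a₁ a₂))
    (hmupos : ∀ x ∈ Set.Ioo a₁ a₂, 0 < mu0 x)
    (xs : ℝ) (hxs : xs ∈ Set.Ioo a₁ a₂)
    (hfix : mu0 xs = lam0 xs)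
    (g₁ g₂ : ℝ → ℝ)
    (hg₁ : ∀ x ∈ Set.Ioo a₁ a₂, g₁ x = Real.log (mu0 x / lam0 x))
    (hg₂ : ∀ x ∈ Set.Ioo a₁ a₂, g₂ x = 2 * (mu0 x - lam0 x) / (mu0 x + lam0 x)) :
    g₁ xs = 0 ∧ g₂ xs = 0 ∧
    deriv g₁ xs = (deriv mu0 xs - deriv lam0 xs) / mu0 xs ∧
    deriv g₂ xs = (deriv mu0 xs - deriv lam0 xs) / mu0 xs := by
  have hU : Set.Ioo a₁ a₂ ∈ 𝓝 xs := isOpen_Ioo.mem_nhds hxs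
  have hmuD : HasDerivAt mu0 (deriv mu0 xs) xs :=
    ((hmu.contDiffAt hU).differentiableAt one_ne_zero).hasDerivAt
  have hlamD : HasDerivAt lam0 (deriv lam0 xs) xs :=
    ((hlam.contDiffAt hU).differentiableAt one_ne_zero).hasDerivAt
  have hmu0 : mu0 xs ≠ 0 := (hmupos xs hxs).ne'
  refine ⟨?_, ?_, ?_, ?_⟩
  · rw [hg₁ xs hxs, hfix, div_self (hfix ▸ hmu0), Real.log_one]
  · rw [hg₂ xs hxs, hfix, sub_self, mul_zero, zero_div]
  · exact ((hmuD.log_div_of_eq hlamD hfix hmu0).congr_of_eventuallyEq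
      (eventually_of_mem hU hg₁)).deriv
  · exact ((hmuD.two_mul_sub_div_add_of_eq hlamD hfix hmu0).congr_of_eventuallyEq
      (eventually_of_mem hU hg₂)).deriv

/-- At a fixed point `x*` of `b = μ₀ - λ₀`, the log-derivatives of the CME
stationary density, `g₁ = ln(μ₀/λ₀)`, and of its diffusion approximation,
`g₂ = 2(μ₀ - λ₀)/(μ₀ + λ₀)`, both vanish and have the same slope
`(μ₀'(x*) - λ₀'(x*))/μ₀(x*)`. -/
theorem cme_and_diffusion_potentials_match_at_fixed_points
    (a₁ a₂ : ℝ) (mu0 lam0 : ℝ → ℝ)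
    (hmu : ContDiffOn ℝ 1 mu0 (Set.Ioo a₁ a₂))
    (hlam : ContDiffOn ℝ 1 lam0 (Set.Ioo a₁ a₂))
    (hmupos : ∀ x ∈ Set.Ioo a₁ a₂, 0 < mu0 x)
    (hlampos : ∀ x ∈ Set.Ioo a₁ a₂, 0 < lam0 x)
    (xs : ℝ) (hxs : xs ∈ Set.Ioo a₁ a₂)
    (hfix : mu0 xs = lam0 xs)
    (g₁ g₂ : ℝ → ℝ)
    (hg₁ : ∀ x ∈ Set.Ioo a₁ a₂, g₁ x = Real.log (mu0 x / lam0 x))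
    (hg₂ : ∀ x ∈ Set.Ioo a₁ a₂, g₂ x = 2 * (mu0 x - lam0 x) / (mu0 x + lam0 x)) :
    g₁ xs = 0 ∧ g₂ xs = 0 ∧
    deriv g₁ xs = (deriv mu0 xs - deriv lam0 xs) / mu0 xs ∧
    deriv g₂ xs = (deriv mu0 xs - deriv lam0 xs) / mu0 xs :=
  cme_and_diffusion_potentials_match_at_fixed_points_general a₁ a₂ mu0 lam0 hmu hlam hmupos xs hxs
    hfix g₁ g₂ hg₁ hg₂
end

section
/- Let k₁, k₂, k₋₁ > 0 and V > 0, and consider the birth–death process with rates u_n = k₁ n (n ≥ 0) and w_n = k₋₁ n(n−1)/V + k₂ n (n ≥ 1). Suppose (p_n)_{n≥0} is a nonnegative sequence with Σ_{n≥0} p_n = 1 satisfying the stationary chemical master equation: −u₀ p₀ + w₁ p₁ = 0 and u_{n−1} p_{n−1} − (u_n + w_n) p_n + w_{n+1} p_{n+1} = 0 for all n ≥ 1. Then p_n = 0 for every n ≥ 1 and p₀ = 1; i.e., for any values of k₁ − k₂ the unique stationary distribution assigns probability 1 to the extinction state n = 0 (Keizer's paradox), even though for k₁ > k₂ the deterministic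 limit dx/dt = (k₁ − k₂)x − k₋₁ x² has a stable fixed point at x = (k₁ − k₂)/k₋₁ > 0. -/
/-!
The birth rate vanishes at the extinction state, `u 0 = 0`. Summing the stationary equations
from `0` to `n` telescopes to the zero-flux condition `w (n+1) p (n+1) = u n p n` across every
edge `n ↔ n+1`. At the edge `0 ↔ 1` the flux is `u 0 p 0 = 0`, and since all death rates
`w (n+1)` are positive the mass `p (n+1)` vanishes edge by edge; the total mass `1` then sits at `0`.
-/

namespace BirthDeath

variable {R : Type*} [CommRing R] {u w p : ℕ → R}

theorem flux_balance (h₀ : -(u 0 * p 0) + w 1 * p 1 = 0)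
    (h : ∀ n : ℕ, 1 ≤ n → u (n - 1) * p (n - 1) - (u n + w n) * p n + w (n + 1) * p (n + 1) = 0)
    (n : ℕ) : w (n + 1) * p (n + 1) = u n * p n := by
  induction n with
  | zero => linear_combination h₀
  | succ n ih =>
    have hn := h (n + 1) (Nat.le_add_left 1 n)
    rw [Nat.add_sub_cancel] at hn
    linear_combination hn + ih

theorem eq_zero_of_flux_balance [NoZeroDivisors R] (hu₀ : u 0 = 0)
    (hw : ∀ n : ℕ, w (n + 1) ≠ 0) (hflux : ∀ n : ℕ, w (n + 1) * p (n + 1) = u n * p n) :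
    ∀ n : ℕ, p (n + 1) = 0 := by
  intro n
  refine (mul_eq_zero.mp ?_).resolve_left (hw n)
  rw [hflux]
  cases n with
  | zero => rw [hu₀, zero_mul]
  | succ n => rw [eq_zero_of_flux_balance hu₀ hw hflux n, mul_zero]

end BirthDeath

theorem keizer_paradox_extinction_general
    (k₁ k₂ km₁ V : ℝ) (hk₂ : 0 < k₂) (hkm₁ : 0 < km₁)
    (hV : 0 < V)
    (u w p : ℕ → ℝ)
    (hu : ∀ n : ℕ, u n = k₁ * n)
    (hw : ∀ n : ℕ, w n = km₁ * n * ((n : ℝ) - 1) / V + k₂ * n)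
    (hsum : HasSum p 1)
    (hstat0 : -(u 0 * p 0) + w 1 * p 1 = 0)
    (hstat : ∀ n : ℕ, 1 ≤ n →
      u (n - 1) * p (n - 1) - (u n + w n) * p n + w (n + 1) * p (n + 1) = 0) :
    (∀ n : ℕ, 1 ≤ n → p n = 0) ∧ p 0 = 1 := by
  have hu₀ : u 0 = 0 := by simp [hu]
  have hw_ne (n : ℕ) : w (n + 1) ≠ 0 := by
    rw [hw, Nat.cast_add_one, add_sub_cancel_right]
    positivity
  have hp := BirthDeath.eq_zero_of_flux_balance hu₀ hw_ne (BirthDeath.flux_balance hstat0 hstat)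
  have hp' (n : ℕ) (hn : 1 ≤ n) : p n = 0 := by
    obtain ⟨m, rfl⟩ := Nat.exists_eq_add_of_le' hn
    exact hp m
  exact ⟨hp', (hasSum_single 0 fun n hn => hp' n (Nat.one_le_iff_ne_zero.mpr hn)).unique hsum⟩

/-- Keizer's paradox: for the birth–death process with rates `u_n = k₁ n` and
`w_n = k₋₁ n(n-1)/V + k₂ n`, any stationary probability distribution of the
chemical master equation is concentrated on the extinction state `n = 0`,
for all values of `k₁ - k₂`. -/
theorem keizer_paradox_extinction
    (k₁ k₂ km₁ V : ℝ) (hk₁ : 0 < k₁) (hk₂ : 0 < k₂) (hkm₁ : 0 < km₁)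
    (hV : 0 < V)
    (u w p : ℕ → ℝ)
    (hu : ∀ n : ℕ, u n = k₁ * n)
    (hw : ∀ n : ℕ, w n = km₁ * n * ((n : ℝ) - 1) / V + k₂ * n)
    (hpnn : ∀ n, 0 ≤ p n)
    (hsum : HasSum p 1)
    (hstat0 : -(u 0 * p 0) + w 1 * p 1 = 0)
    (hstat : ∀ n : ℕ, 1 ≤ n →
      u (n - 1) * p (n - 1) - (u n + w n) * p n + w (n + 1) * p (n + 1) = 0) :
    (∀ n : ℕ, 1 ≤ n → p n = 0) ∧ p 0 = 1 :=
  keizer_paradox_extinction_general k₁ k₂ km₁ V hk₂ hkm₁ hV u w p hu hw hsum hstat0 hstat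
end
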